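/- arXiv:2311.17387 — 3 statements merged into one kernel-verified Lean document; each statement's English description precedes it below -/
import Mathlib

section
/- Let H₁ and H₂ be numerical semigroups, let x₁ ∈ H₁ ∖ G(H₁) and x₂ ∈ H₂ ∖ G(H₂) be nonzero with gcd(x₁, x₂) = 1, and let H = x₂·H₁ + x₁·H₂ be their gluing. Then the Frobenius numbers satisfy F(H) = x₂·F(H₁) + x₁·F(H₂) + x₁·x₂. -/
/-- A numerical semigroup: an additive submonoid of `ℕ` with finite complement. -/
def IsNumericalSemigroup (H : Set ℕ) : Prop :=
  0 ∈ H ∧ (∀ a ∈ H, ∀ b ∈ H, a + b ∈ H) ∧ Hᶜ.Finite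

/-- The minimal generating system `G(H) = (H \ {0}) \ ((H \ {0}) + (H \ {0}))`. -/
def minGens (H : Set ℕ) : Set ℕ :=
  (H \ {0}) \ {x | ∃ a ∈ H \ {0}, ∃ b ∈ H \ {0}, x = a + b}

/-- The Apéry set `Ap(H, s) = {a ∈ H : a - s ∉ H}` (the subtraction taken in `ℤ`,
i.e. `a` is not of the form `b + s` with `b ∈ H`). -/
def apery (H : Set ℕ) (s : ℕ) : Set ℕ :=
  {a | a ∈ H ∧ ¬ ∃ b ∈ H, a = b + s}

/-- The gluing `x₂·H₁ + x₁·H₂` of two numerical semigroups. -/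
def glue (x₂ : ℕ) (H₁ : Set ℕ) (x₁ : ℕ) (H₂ : Set ℕ) : Set ℕ :=
  {n | ∃ a ∈ H₁, ∃ b ∈ H₂, n = x₂ * a + x₁ * b}

/-- Membership of an integer in (the image in `ℤ` of) a numerical semigroup. -/
def intMem (H : Set ℕ) (z : ℤ) : Prop := ∃ n ∈ H, (n : ℤ) = z

/-- `F` is the Frobenius number of `H`: the largest integer not belonging to `H`
(with the convention `F(ℕ) = -1`). -/
def IsFrobeniusNumber (H : Set ℕ) (F : ℤ) : Prop :=
  ¬ intMem H F ∧ ∀ z : ℤ, F < z → intMem H z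

/-- Uniqueness of the Frobenius number. -/
lemma frob_unique {H : Set ℕ} {F F' : ℤ} (h : IsFrobeniusNumber H F)
    (h' : IsFrobeniusNumber H F') : F = F' := by
  rcases lt_trichotomy F F' with hlt | heq | hgt
  · exact absurd (h.2 F' hlt) h'.1
  · exact heq
  · exact absurd (h'.2 F hgt) h.1

lemma mem_add_mul {H : Set ℕ} (hadd : ∀ a ∈ H, ∀ b ∈ H, a + b ∈ H)
    {x : ℕ} (hx : x ∈ H) {a : ℕ} (ha : a ∈ H) (m : ℕ) : a + m * x ∈ H := by
  induction m with
  | zero => simpa using ha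
  | succ n ih =>
    have := hadd _ ih _ hx
    have h : a + n * x + x = a + (n + 1) * x := by ring
    rwa [h] at this

theorem frobenius_of_gluing (H₁ H₂ : Set ℕ)
    (hH₁ : IsNumericalSemigroup H₁) (hH₂ : IsNumericalSemigroup H₂)
    (x₁ x₂ : ℕ) (hx₁ : x₁ ∈ H₁ \ minGens H₁) (hx₂ : x₂ ∈ H₂ \ minGens H₂)
    (hx₁0 : x₁ ≠ 0) (hx₂0 : x₂ ≠ 0) (hgcd : Nat.gcd x₁ x₂ = 1)
    (F₁ F₂ F : ℤ) (hF₁ : IsFrobeniusNumber H₁ F₁) (hF₂ : IsFrobeniusNumber H₂ F₂)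
    (hF : IsFrobeniusNumber (glue x₂ H₁ x₁ H₂) F) :
    F = (x₂ : ℤ) * F₁ + (x₁ : ℤ) * F₂ + (x₁ : ℤ) * (x₂ : ℤ) := by
  have hx₁H : x₁ ∈ H₁ := hx₁.1
  have hx₂H : x₂ ∈ H₂ := hx₂.1
  have hx₁pos : (0 : ℤ) < (x₁ : ℤ) := by exact_mod_cast Nat.pos_of_ne_zero hx₁0
  have hx₂pos : (0 : ℤ) < (x₂ : ℤ) := by exact_mod_cast Nat.pos_of_ne_zero hx₂0
  have hcop : IsCoprime (x₁ : ℤ) (x₂ : ℤ) := by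
    rw [Int.isCoprime_iff_gcd_eq_one, Int.gcd_natCast_natCast, hgcd]
  set F' : ℤ := (x₂ : ℤ) * F₁ + (x₁ : ℤ) * F₂ + (x₁ : ℤ) * (x₂ : ℤ) with hF'def
  have hmain : IsFrobeniusNumber (glue x₂ H₁ x₁ H₂) F' := by
    constructor
    · -- F' is not in the gluing
      rintro ⟨n, ⟨a, ha, b, hb, hn⟩, hcast⟩
      subst hn
      have heq : (x₂ : ℤ) * a + (x₁ : ℤ) * b = F' := by push_cast at hcast; linarith
      have hdvd : (x₁ : ℤ) ∣ (x₂ : ℤ) * ((a : ℤ) - F₁) := by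
        refine ⟨F₂ + x₂ - b, ?_⟩
        rw [hF'def] at heq; ring_nf; ring_nf at heq; linarith
      have hdvd' : (x₁ : ℤ) ∣ ((a : ℤ) - F₁) := hcop.dvd_of_dvd_mul_left hdvd
      obtain ⟨k, hk⟩ := hdvd'
      have hb_eq : (b : ℤ) = F₂ + (x₂ : ℤ) * (1 - k) := by
        have h1 : (x₂ : ℤ) * ((x₁:ℤ) * k) = (x₁:ℤ) * (F₂ + x₂ - b) := by
          rw [← hk]; rw [hF'def] at heq; ring_nf; ring_nf at heq; linarith
        have h2 : (x₁ : ℤ) * ((x₂:ℤ) * k) = (x₁:ℤ) * (F₂ + x₂ - b) := by linarith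
        have := mul_left_cancel₀ (ne_of_gt hx₁pos) h2
        linarith
      rcases le_or_gt k 0 with hk0 | hk1
      · -- then F₁ = a + (-k) * x₁ ∈ H₁
        obtain ⟨m, hm⟩ := Int.eq_ofNat_of_zero_le (neg_nonneg.mpr hk0)
        apply hF₁.1
        refine ⟨a + m * x₁, mem_add_mul hH₁.2.1 hx₁H ha m, ?_⟩
        have hkm : k = -(m:ℤ) := by linarith
        have hq : (a:ℤ) - F₁ = -((x₁:ℤ) * m) := by rw [hk, hkm]; ring
        push_cast
        linarith
      · -- k ≥ 1, then F₂ = b + (k-1) * x₂ ∈ H₂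
        have hk1' : 1 ≤ k := hk1
        obtain ⟨m, hm⟩ := Int.eq_ofNat_of_zero_le (sub_nonneg.mpr hk1')
        apply hF₂.1
        refine ⟨b + m * x₂, mem_add_mul hH₂.2.1 hx₂H hb m, ?_⟩
        push_cast
        nlinarith [hm, hb_eq]
    · -- every z > F' is in the gluing
      intro z hz
      obtain ⟨s, t, hst⟩ := hcop
      set v : ℤ := F₂ + 1 + (s * z - (F₂ + 1)) % (x₂ : ℤ) with hv
      have hmod_nonneg : 0 ≤ (s * z - (F₂ + 1)) % (x₂ : ℤ) :=
        Int.emod_nonneg _ (ne_of_gt hx₂pos)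
      have hmod_lt : (s * z - (F₂ + 1)) % (x₂ : ℤ) < x₂ :=
        Int.emod_lt_of_pos _ hx₂pos
      have hvgt : F₂ < v := by simp [hv]; linarith
      have hvle : v ≤ F₂ + x₂ := by simp [hv]; linarith
      have hdvd : (x₂ : ℤ) ∣ (z - x₁ * v) := by
        have h1 : s * z - (F₂ + 1) = (x₂:ℤ) * ((s * z - (F₂ + 1)) / x₂) + (s * z - (F₂ + 1)) % x₂ :=
          (Int.mul_ediv_add_emod _ _).symm
        refine ⟨t * z + x₁ * ((s * z - (F₂ + 1)) / x₂), ?_⟩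
        rw [hv]
        linear_combination (x₁ : ℤ) * h1 - z * hst
      obtain ⟨u, hu⟩ := hdvd
      have huval : (x₂ : ℤ) * u = z - x₁ * v := hu.symm
      have huF : F₁ < u := by
        have h1 : (x₁:ℤ) * v ≤ (x₁:ℤ) * (F₂ + x₂) := by
          exact mul_le_mul_of_nonneg_left hvle (le_of_lt hx₁pos)
        have h2 : (x₂ : ℤ) * F₁ < (x₂:ℤ) * u := by rw [hF'def] at hz; nlinarith
        exact lt_of_mul_lt_mul_left h2 (le_of_lt hx₂pos)
      obtain ⟨a, ha, hacast⟩ := hF₁.2 u huF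
      obtain ⟨b, hb, hbcast⟩ := hF₂.2 v hvgt
      refine ⟨x₂ * a + x₁ * b, ⟨a, ha, b, hb, rfl⟩, ?_⟩
      push_cast
      rw [hacast, hbcast]
      linarith [huval]
  exact frob_unique hF hmain
end

section
/- Let H₁ and H₂ be numerical semigroups, let x₁ ∈ H₁ ∖ G(H₁) and x₂ ∈ H₂ ∖ G(H₂) be nonzero with gcd(x₁, x₂) = 1, and let H = x₂·H₁ + x₁·H₂ be their gluing. Then H is symmetric if and only if both H₁ and H₂ are symmetric. -/
/-- `H` is symmetric: for every `z ∈ ℤ`, either `z ∈ H` or `F(H) - z ∈ H`. -/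
def IsSymmetricNSG (H : Set ℕ) : Prop :=
  ∃ F : ℤ, IsFrobeniusNumber H F ∧ ∀ z : ℤ, intMem H z ∨ intMem H (F - z)

/-! Write `F₁, F₂` for the Frobenius numbers of `H₁, H₂`. Every integer `z` has a representation
`z = x₂ a + x₁ b` with `b ∈ H₂` and `b - x₂ ∉ H₂`, and for such a representation `z` lies in the
gluing `H` exactly when `a ∈ H₁`. Reading off this criterion gives `F(H) = x₂ F₁ + x₁ F₂ + x₁ x₂`,
and `F(H) - z = x₂ (F₁ - a) + x₁ (F₂ + x₂ - b)`, which transports the symmetry condition between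
`H` and `H₁` (and, as the gluing is symmetric in its two factors, `H₂`). -/

variable {H H₁ H₂ : Set ℕ} {x x₁ x₂ : ℕ} {F F₁ F₂ : ℤ}

lemma intMem_nonneg {z : ℤ} (h : intMem H z) : 0 ≤ z := by
  obtain ⟨n, -, rfl⟩ := h
  positivity

namespace IsNumericalSemigroup

lemma intMem_add (hH : IsNumericalSemigroup H) {a b : ℤ} (ha : intMem H a) (hb : intMem H b) :
    intMem H (a + b) := by
  obtain ⟨m, hm, rfl⟩ := ha
  obtain ⟨n, hn, rfl⟩ := hb
  exact ⟨m + n, hH.2.1 m hm n hn, by push_cast; ring⟩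

lemma intMem_add_mul (hH : IsNumericalSemigroup H) (hx : x ∈ H) {a t : ℤ} (ha : intMem H a)
    (ht : 0 ≤ t) : intMem H (a + x * t) := by
  lift t to ℕ using ht
  induction t with
  | zero => simpa using ha
  | succ n ih =>
    convert hH.intMem_add ih ⟨x, hx, rfl⟩ using 1
    push_cast
    ring

end IsNumericalSemigroup

lemma exists_isFrobeniusNumber (h : Hᶜ.Finite) : ∃ F, IsFrobeniusNumber H F := by
  rcases Hᶜ.eq_empty_or_nonempty with hempty | hne
  · refine ⟨-1, fun hF => by linarith [intMem_nonneg hF], fun z hz => ⟨z.toNat, ?_, by omega⟩⟩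
    by_contra hz'
    exact (hempty ▸ hz' : z.toNat ∈ (∅ : Set ℕ))
  · refine ⟨((sSup Hᶜ : ℕ) : ℤ), ?_, fun z hz => ⟨z.toNat, ?_, by omega⟩⟩
    · rintro ⟨n, hn, hnF⟩
      rw [Nat.cast_inj] at hnF
      exact Nat.sSup_mem hne h.bddAbove (hnF ▸ hn)
    · by_contra hz'
      have := le_csSup h.bddAbove hz'
      omega

namespace IsFrobeniusNumber

lemma eq (hF : IsFrobeniusNumber H F) {F' : ℤ} (hF' : IsFrobeniusNumber H F') : F = F' :=
  le_antisymm (not_lt.1 fun h => hF.1 (hF'.2 _ h)) (not_lt.1 fun h => hF'.1 (hF.2 _ h))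

lemma isSymmetricNSG_iff (hF : IsFrobeniusNumber H F) :
    IsSymmetricNSG H ↔ ∀ z, intMem H z ∨ intMem H (F - z) :=
  ⟨fun ⟨_, hF', h⟩ => hF'.eq hF ▸ h, fun h => ⟨F, hF, h⟩⟩

lemma le_of_not_intMem (hF : IsFrobeniusNumber H F) {z : ℤ} (hz : ¬ intMem H z) : z ≤ F :=
  not_lt.1 fun h => hz (hF.2 z h)

/-- `b - x k` is the element of the Apéry set `Ap(H, x)` congruent to `b` modulo `x`. -/
lemma exists_intMem_sub_mul (hF : IsFrobeniusNumber H F) (hx : x ≠ 0) (b : ℤ) :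
    ∃ k : ℤ, intMem H (b - x * k) ∧ ¬ intMem H (b - x * k - x) := by
  have hx1 : (1 : ℤ) ≤ x := by exact_mod_cast Nat.one_le_iff_ne_zero.2 hx
  have hbdd : ∀ k, intMem H (b - x * k) → k ≤ |b| := fun k hk => by
    have := intMem_nonneg hk
    rcases le_or_gt k 0 with h | h <;> nlinarith [abs_nonneg b, le_abs_self b]
  have hne : intMem H (b - x * -(|b| + |F| + 1)) := hF.2 _ <| by
    have : (0 : ℤ) ≤ (x - 1) * (|b| + |F| + 1) := mul_nonneg (by omega) (by positivity)
    linarith [le_abs_self F, neg_abs_le b]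
  obtain ⟨k, hk, hmax⟩ := Int.exists_greatest_of_bdd ⟨|b|, hbdd⟩ ⟨_, hne⟩
  refine ⟨k, hk, fun hk' => ?_⟩
  have := hmax (k + 1) (by rwa [mul_add_one, ← sub_sub])
  omega

end IsFrobeniusNumber

lemma IsCoprime.exists_eq_add_mul_of_mul_add_mul_eq {u v a b a' b' : ℤ} (huv : IsCoprime u v)
    (hu : u ≠ 0) (h : v * a + u * b = v * a' + u * b') :
    ∃ k : ℤ, a' = a + u * k ∧ b' = b - v * k := by
  obtain ⟨k, hk⟩ : u ∣ a' - a := huv.dvd_of_dvd_mul_left ⟨b - b', by linear_combination -h⟩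
  refine ⟨k, by linarith, mul_left_cancel₀ hu ?_⟩
  linear_combination -h - v * hk

lemma glue_comm : glue x₂ H₁ x₁ H₂ = glue x₁ H₂ x₂ H₁ := by
  ext n
  constructor <;> rintro ⟨a, ha, b, hb, rfl⟩ <;> exact ⟨b, hb, a, ha, add_comm _ _⟩

lemma intMem_glue_iff {z : ℤ} :
    intMem (glue x₂ H₁ x₁ H₂) z ↔ ∃ a b : ℤ, intMem H₁ a ∧ intMem H₂ b ∧ z = x₂ * a + x₁ * b := by
  constructor
  · rintro ⟨n, ⟨a, ha, b, hb, rfl⟩, rfl⟩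
    exact ⟨a, b, ⟨a, ha, rfl⟩, ⟨b, hb, rfl⟩, by push_cast; ring⟩
  · rintro ⟨a, b, ⟨a, ha, rfl⟩, ⟨b, hb, rfl⟩, rfl⟩
    exact ⟨x₂ * a + x₁ * b, ⟨a, ha, b, hb, rfl⟩, by push_cast; ring⟩

lemma intMem_glue_of_intMem {a b : ℤ} (ha : intMem H₁ a) (hb : intMem H₂ b) :
    intMem (glue x₂ H₁ x₁ H₂) (x₂ * a + x₁ * b) :=
  intMem_glue_iff.2 ⟨a, b, ha, hb, rfl⟩

lemma exists_glue_repr (hF₂ : IsFrobeniusNumber H₂ F₂) (hx₂0 : x₂ ≠ 0)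
    (hcop : Nat.Coprime x₁ x₂) (z : ℤ) :
    ∃ a b : ℤ, z = x₂ * a + x₁ * b ∧ intMem H₂ b ∧ ¬ intMem H₂ (b - x₂) := by
  obtain ⟨u, v, huv⟩ := Nat.isCoprime_iff_coprime.2 hcop
  obtain ⟨k, hk, hk'⟩ := hF₂.exists_intMem_sub_mul hx₂0 (u * z)
  exact ⟨v * z + x₁ * k, u * z - x₂ * k, by linear_combination -z * huv, hk, hk'⟩

lemma intMem_glue_iff_of_apery (hH₁ : IsNumericalSemigroup H₁) (hH₂ : IsNumericalSemigroup H₂)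
    (hx₁ : x₁ ∈ H₁) (hx₂ : x₂ ∈ H₂) (hx₁0 : x₁ ≠ 0) (hcop : Nat.Coprime x₁ x₂) {a b : ℤ}
    (hb : intMem H₂ b) (hb' : ¬ intMem H₂ (b - x₂)) :
    intMem (glue x₂ H₁ x₁ H₂) (x₂ * a + x₁ * b) ↔ intMem H₁ a := by
  refine ⟨fun h => ?_, fun ha => intMem_glue_of_intMem ha hb⟩
  obtain ⟨a', b', ha', hb'', heq⟩ := intMem_glue_iff.1 h
  obtain ⟨k, rfl, rfl⟩ := (Nat.isCoprime_iff_coprime.2 hcop).exists_eq_add_mul_of_mul_add_mul_eq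
    (by exact_mod_cast hx₁0) heq
  rcases le_or_gt k 0 with hk | hk
  · simpa using hH₁.intMem_add_mul hx₁ ha' (neg_nonneg.2 hk)
  · refine absurd ?_ hb'
    convert hH₂.intMem_add_mul hx₂ hb'' (by omega : 0 ≤ k - 1) using 1
    ring

lemma intMem_glue_add_frobenius_iff (hH₁ : IsNumericalSemigroup H₁)
    (hH₂ : IsNumericalSemigroup H₂) (hx₁ : x₁ ∈ H₁) (hx₂ : x₂ ∈ H₂) (hx₁0 : x₁ ≠ 0)
    (hx₂0 : x₂ ≠ 0) (hcop : Nat.Coprime x₁ x₂) (hF₂ : IsFrobeniusNumber H₂ F₂) {a : ℤ} :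
    intMem (glue x₂ H₁ x₁ H₂) (x₂ * a + x₁ * (F₂ + x₂)) ↔ intMem H₁ a :=
  intMem_glue_iff_of_apery hH₁ hH₂ hx₁ hx₂ hx₁0 hcop (hF₂.2 _ (by omega)) (by simpa using hF₂.1)

lemma isFrobeniusNumber_glue (hH₁ : IsNumericalSemigroup H₁) (hH₂ : IsNumericalSemigroup H₂)
    (hx₁ : x₁ ∈ H₁) (hx₂ : x₂ ∈ H₂) (hx₁0 : x₁ ≠ 0) (hx₂0 : x₂ ≠ 0) (hcop : Nat.Coprime x₁ x₂)
    (hF₁ : IsFrobeniusNumber H₁ F₁) (hF₂ : IsFrobeniusNumber H₂ F₂) :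
    IsFrobeniusNumber (glue x₂ H₁ x₁ H₂) (x₂ * F₁ + x₁ * F₂ + x₁ * x₂) := by
  refine ⟨fun h => hF₁.1 ?_, fun z hz => ?_⟩
  · rw [← intMem_glue_add_frobenius_iff hH₁ hH₂ hx₁ hx₂ hx₁0 hx₂0 hcop hF₂]
    convert h using 1
    ring
  · obtain ⟨a, b, rfl, hb, hb'⟩ := exists_glue_repr hF₂ hx₂0 hcop z
    rw [intMem_glue_iff_of_apery hH₁ hH₂ hx₁ hx₂ hx₁0 hcop hb hb']
    have hbF : b - x₂ ≤ F₂ := hF₂.le_of_not_intMem hb'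
    have hx₂pos : (0 : ℤ) < x₂ := by omega
    exact hF₁.2 a (by nlinarith)

lemma IsSymmetricNSG.of_glue (hH₁ : IsNumericalSemigroup H₁) (hH₂ : IsNumericalSemigroup H₂)
    (hx₁ : x₁ ∈ H₁) (hx₂ : x₂ ∈ H₂) (hx₁0 : x₁ ≠ 0) (hx₂0 : x₂ ≠ 0) (hcop : Nat.Coprime x₁ x₂)
    (h : IsSymmetricNSG (glue x₂ H₁ x₁ H₂)) : IsSymmetricNSG H₁ := by
  obtain ⟨F₁, hF₁⟩ := exists_isFrobeniusNumber hH₁.2.2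
  obtain ⟨F₂, hF₂⟩ := exists_isFrobeniusNumber hH₂.2.2
  rw [(isFrobeniusNumber_glue hH₁ hH₂ hx₁ hx₂ hx₁0 hx₂0 hcop hF₁ hF₂).isSymmetricNSG_iff] at h
  refine hF₁.isSymmetricNSG_iff.2 fun a => or_iff_not_imp_left.2 fun ha => ?_
  rw [← intMem_glue_add_frobenius_iff hH₁ hH₂ hx₁ hx₂ hx₁0 hx₂0 hcop hF₂] at ha
  have hdual : intMem (glue x₂ H₁ x₁ H₂) (x₂ * (F₁ - a) + x₁ * 0) := by
    convert (h _).resolve_left ha using 1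
    ring
  have hx₂pos : (0 : ℤ) < x₂ := by omega
  exact (intMem_glue_iff_of_apery hH₁ hH₂ hx₁ hx₂ hx₁0 hcop (b := 0) ⟨0, hH₂.1, rfl⟩
    (fun h0 => by linarith [intMem_nonneg h0])).1 hdual

lemma IsSymmetricNSG.glue (hH₁ : IsNumericalSemigroup H₁) (hH₂ : IsNumericalSemigroup H₂)
    (hx₁ : x₁ ∈ H₁) (hx₂ : x₂ ∈ H₂) (hx₁0 : x₁ ≠ 0) (hx₂0 : x₂ ≠ 0) (hcop : Nat.Coprime x₁ x₂)
    (h₁ : IsSymmetricNSG H₁) (h₂ : IsSymmetricNSG H₂) : IsSymmetricNSG (glue x₂ H₁ x₁ H₂) := by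
  obtain ⟨F₁, hF₁, hs₁⟩ := h₁
  obtain ⟨F₂, hF₂, hs₂⟩ := h₂
  refine (isFrobeniusNumber_glue hH₁ hH₂ hx₁ hx₂ hx₁0 hx₂0 hcop hF₁ hF₂).isSymmetricNSG_iff.2
    fun z => or_iff_not_imp_left.2 fun hz => ?_
  obtain ⟨a, b, rfl, hb, hb'⟩ := exists_glue_repr hF₂ hx₂0 hcop z
  rw [intMem_glue_iff_of_apery hH₁ hH₂ hx₁ hx₂ hx₁0 hcop hb hb'] at hz
  convert intMem_glue_of_intMem ((hs₁ a).resolve_left hz) ((hs₂ _).resolve_left hb') using 1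
  ring

theorem symmetric_of_gluing_iff (H₁ H₂ : Set ℕ)
    (hH₁ : IsNumericalSemigroup H₁) (hH₂ : IsNumericalSemigroup H₂)
    (x₁ x₂ : ℕ) (hx₁ : x₁ ∈ H₁ \ minGens H₁) (hx₂ : x₂ ∈ H₂ \ minGens H₂)
    (hx₁0 : x₁ ≠ 0) (hx₂0 : x₂ ≠ 0) (hgcd : Nat.gcd x₁ x₂ = 1) :
    IsSymmetricNSG (glue x₂ H₁ x₁ H₂) ↔ IsSymmetricNSG H₁ ∧ IsSymmetricNSG H₂ := by
  have hcop : Nat.Coprime x₁ x₂ := hgcd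
  refine ⟨fun h => ⟨h.of_glue hH₁ hH₂ hx₁.1 hx₂.1 hx₁0 hx₂0 hcop, ?_⟩,
    fun ⟨h₁, h₂⟩ => h₁.glue hH₁ hH₂ hx₁.1 hx₂.1 hx₁0 hx₂0 hcop h₂⟩
  rw [glue_comm] at h
  exact h.of_glue hH₂ hH₁ hx₂.1 hx₁.1 hx₂0 hx₁0 hcop.symm
end

section
/- Let H₁ and H₂ be numerical semigroups, let x₁ ∈ H₁ ∖ G(H₁) and x₂ ∈ H₂ ∖ G(H₂) be nonzero with gcd(x₁, x₂) = 1, and let H = x₂·H₁ + x₁·H₂ be their gluing. Then in ℤ[X] one has the polynomial identity Σ_{w ∈ Ap(H, x₁x₂)} X^w = ( Σ_{a ∈ Ap(H₁, x₁)} X^{x₂·a} ) · ( Σ_{b ∈ Ap(H₂, x₂)} X^{x₁·b} ). -/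
lemma add_mul_mem {H : Set ℕ} (hadd : ∀ a ∈ H, ∀ b ∈ H, a + b ∈ H)
    {a : ℕ} (ha : a ∈ H) {s : ℕ} (hs : s ∈ H) (m : ℕ) : a + s * m ∈ H := by
  induction m with
  | zero => simpa using ha
  | succ m ih => rw [Nat.mul_succ, ← Nat.add_assoc]; exact hadd _ ih _ hs

lemma apery_mod_lt {H : Set ℕ} (hadd : ∀ a ∈ H, ∀ b ∈ H, a + b ∈ H)
    {s : ℕ} (hs : s ∈ H) {a a' : ℕ} (ha : a ∈ apery H s) (ha' : a' ∈ apery H s)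
    (hlt : a < a') (h : a % s = a' % s) : False := by
  have hd : s ∣ a' - a := (Nat.modEq_iff_dvd' hlt.le).mp h
  obtain ⟨k, hk⟩ := hd
  have hk1 : 1 ≤ k := by
    rcases k with _ | k
    · rw [Nat.mul_zero] at hk; omega
    · omega
  obtain ⟨j, rfl⟩ : ∃ j, k = j + 1 := ⟨k - 1, by omega⟩
  refine ha'.2 ⟨a + s * j, add_mul_mem hadd ha.1 hs j, ?_⟩
  have ha'' : a' = a + s * (j + 1) := by omega
  rw [ha'', Nat.mul_succ, ← Nat.add_assoc]

lemma apery_finite {H : Set ℕ} (hadd : ∀ a ∈ H, ∀ b ∈ H, a + b ∈ H)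
    {s : ℕ} (hs : s ∈ H) (hs0 : s ≠ 0) : (apery H s).Finite := by
  have hinj : Set.InjOn (· % s) (apery H s) := by
    intro a ha a' ha' h
    rcases lt_trichotomy a a' with hlt | he | hlt
    · exact absurd (apery_mod_lt hadd hs ha ha' hlt h) (by simp)
    · exact he
    · exact absurd (apery_mod_lt hadd hs ha' ha hlt h.symm) (by simp)
  have : ((· % s) '' apery H s).Finite :=
    Set.Finite.subset (Set.finite_Iio s) (by
      rintro _ ⟨a, _, rfl⟩
      exact Nat.mod_lt a (Nat.pos_of_ne_zero hs0))
  exact Set.Finite.of_finite_image this hinj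

lemma apery_decomp {H : Set ℕ} {s : ℕ} (hs0 : s ≠ 0) :
    ∀ n ∈ H, ∃ a ∈ apery H s, ∃ k, n = a + s * k := by
  intro n
  induction n using Nat.strong_induction_on with
  | _ n ih =>
    intro hn
    by_cases h : ∃ b ∈ H, n = b + s
    · obtain ⟨b, hb, rfl⟩ := h
      obtain ⟨a, ha, k, hk⟩ := ih b (by omega) hb
      exact ⟨a, ha, k + 1, by rw [hk, Nat.mul_succ]; ring⟩
    · exact ⟨n, ⟨hn, h⟩, 0, by simp⟩

lemma key_div {x₁ x₂ : ℕ} (hx₁0 : x₁ ≠ 0) (hgcd : Nat.gcd x₁ x₂ = 1)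
    {a a' b b' : ℕ} (heq : x₂ * a + x₁ * b = x₂ * a' + x₁ * b') :
    (∃ k : ℕ, a = a' + x₁ * k ∧ b' = b + x₂ * k) ∨
      (∃ k : ℕ, a' = a + x₁ * k ∧ b = b' + x₂ * k) := by
  have hz : (x₂ : ℤ) * ((a : ℤ) - a') = (x₁ : ℤ) * ((b' : ℤ) - b) := by
    have := congrArg (Nat.cast (R := ℤ)) heq
    push_cast at this; linarith
  have hco : IsCoprime (x₁ : ℤ) (x₂ : ℤ) := by
    rw [Int.isCoprime_iff_gcd_eq_one]
    simpa [Int.gcd_natCast_natCast] using hgcd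
  have hdvd : (x₁ : ℤ) ∣ (a : ℤ) - a' := by
    have h1 : (x₁ : ℤ) ∣ (x₂ : ℤ) * ((a : ℤ) - a') := ⟨_, hz⟩
    exact hco.dvd_of_dvd_mul_left h1
  obtain ⟨t, ht⟩ := hdvd
  have ht2 : (b' : ℤ) - b = x₂ * t := by
    have hx : (x₁ : ℤ) ≠ 0 := by exact_mod_cast hx₁0
    apply mul_left_cancel₀ hx
    rw [← hz, ht]; ring
  rcases le_or_gt 0 t with h0 | h0
  · left
    refine ⟨t.toNat, ?_, ?_⟩
    · have : (a : ℤ) = a' + x₁ * t.toNat := by rw [Int.toNat_of_nonneg h0]; linarith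
      exact_mod_cast this
    · have : (b' : ℤ) = b + x₂ * t.toNat := by rw [Int.toNat_of_nonneg h0]; linarith
      exact_mod_cast this
  · right
    refine ⟨(-t).toNat, ?_, ?_⟩
    · have : (a' : ℤ) = a + x₁ * (-t).toNat := by
        rw [Int.toNat_of_nonneg (by linarith)]; linarith
      exact_mod_cast this
    · have : (b : ℤ) = b' + x₂ * (-t).toNat := by
        rw [Int.toNat_of_nonneg (by linarith)]; linarith
      exact_mod_cast this

open Polynomial in
theorem apery_polynomial_identity_of_gluing (H₁ H₂ : Set ℕ)
    (hH₁ : IsNumericalSemigroup H₁) (hH₂ : IsNumericalSemigroup H₂)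
    (x₁ x₂ : ℕ) (hx₁ : x₁ ∈ H₁ \ minGens H₁) (hx₂ : x₂ ∈ H₂ \ minGens H₂)
    (hx₁0 : x₁ ≠ 0) (hx₂0 : x₂ ≠ 0) (hgcd : Nat.gcd x₁ x₂ = 1) :
    ∑ᶠ w ∈ apery (glue x₂ H₁ x₁ H₂) (x₁ * x₂), (X : Polynomial ℤ) ^ w =
      (∑ᶠ a ∈ apery H₁ x₁, (X : Polynomial ℤ) ^ (x₂ * a)) *
        ∑ᶠ b ∈ apery H₂ x₂, (X : Polynomial ℤ) ^ (x₁ * b) := by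
  obtain ⟨h10, h1add, -⟩ := hH₁
  obtain ⟨h20, h2add, -⟩ := hH₂
  have hx₁H : x₁ ∈ H₁ := hx₁.1
  have hx₂H : x₂ ∈ H₂ := hx₂.1
  set H := glue x₂ H₁ x₁ H₂ with hHdef
  have hHadd : ∀ a ∈ H, ∀ b ∈ H, a + b ∈ H := by
    rintro _ ⟨a, ha, b, hb, rfl⟩ _ ⟨a', ha', b', hb', rfl⟩
    exact ⟨a + a', h1add _ ha _ ha', b + b', h2add _ hb _ hb', by ring⟩
  have hsH : x₁ * x₂ ∈ H := ⟨x₁, hx₁H, 0, h20, by ring⟩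
  have hs0 : x₁ * x₂ ≠ 0 := Nat.mul_ne_zero hx₁0 hx₂0
  have hA : (apery H₁ x₁).Finite := apery_finite h1add hx₁H hx₁0
  have hB : (apery H₂ x₂).Finite := apery_finite h2add hx₂H hx₂0
  have hC : (apery H (x₁ * x₂)).Finite := apery_finite hHadd hsH hs0
  -- Claim A: the map lands in the Apéry set of H
  have claimA : ∀ a ∈ apery H₁ x₁, ∀ b ∈ apery H₂ x₂,
      x₂ * a + x₁ * b ∈ apery H (x₁ * x₂) := by
    intro a ha b hb
    refine ⟨⟨a, ha.1, b, hb.1, rfl⟩, ?_⟩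
    rintro ⟨-, ⟨a', ha', b', hb', rfl⟩, heq⟩
    have heq' : x₂ * a + x₁ * b = x₂ * a' + x₁ * (b' + x₂) := by
      rw [heq]; ring
    rcases key_div hx₁0 hgcd heq' with ⟨k, hk1, hk2⟩ | ⟨k, hk1, hk2⟩
    · rcases Nat.eq_zero_or_pos k with h0 | h0
      · subst h0
        exact hb.2 ⟨b', hb', by omega⟩
      · obtain ⟨j, rfl⟩ : ∃ j, k = j + 1 := ⟨k - 1, by omega⟩
        exact ha.2 ⟨a' + x₁ * j, add_mul_mem h1add ha' hx₁H j,
          by rw [hk1, Nat.mul_succ]; ring⟩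
    · exact hb.2 ⟨b' + x₂ * k, add_mul_mem h2add hb' hx₂H k, by omega⟩
  -- Claim B: surjectivity
  have claimB : ∀ w ∈ apery H (x₁ * x₂), ∃ a ∈ apery H₁ x₁, ∃ b ∈ apery H₂ x₂,
      w = x₂ * a + x₁ * b := by
    rintro w hw
    obtain ⟨a₀, ha₀, b₀, hb₀, hw'⟩ := hw.1
    obtain ⟨a, ha, k, hk⟩ := apery_decomp hx₁0 a₀ ha₀
    obtain ⟨b, hb, m, hm⟩ := apery_decomp hx₂0 b₀ hb₀
    rcases Nat.eq_zero_or_pos (k + m) with h0 | h0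
    · refine ⟨a, ha, b, hb, ?_⟩
      obtain ⟨hk0, hm0⟩ : k = 0 ∧ m = 0 := by omega
      subst hk0; subst hm0
      simp only [Nat.mul_zero, Nat.add_zero] at hk hm
      rw [hw', hk, hm]
    · exfalso
      obtain ⟨j, hj⟩ : ∃ j, k + m = j + 1 := ⟨k + m - 1, by omega⟩
      refine hw.2 ⟨x₂ * (a + x₁ * j) + x₁ * b,
        ⟨a + x₁ * j, add_mul_mem h1add ha.1 hx₁H j, b, hb.1, rfl⟩, ?_⟩
      rw [hw', hk, hm]
      have : (x₂ * (a + x₁ * k) + x₁ * (b + x₂ * m) : ℤ) =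
          (x₂ * (a + x₁ * j) + x₁ * b + x₁ * x₂ : ℤ) := by
        have hj' : (k : ℤ) + m = j + 1 := by exact_mod_cast hj
        linear_combination (x₁ * x₂ : ℤ) * hj'
      exact_mod_cast this
  -- Claim C: injectivity
  have claimC : ∀ a ∈ apery H₁ x₁, ∀ b ∈ apery H₂ x₂, ∀ a' ∈ apery H₁ x₁,
      ∀ b' ∈ apery H₂ x₂, x₂ * a + x₁ * b = x₂ * a' + x₁ * b' → a = a' ∧ b = b' := by
    intro a ha b hb a' ha' b' hb' heq
    rcases key_div hx₁0 hgcd heq with ⟨k, hk1, hk2⟩ | ⟨k, hk1, hk2⟩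
    · rcases Nat.eq_zero_or_pos k with h0 | h0
      · subst h0; omega
      · obtain ⟨j, rfl⟩ : ∃ j, k = j + 1 := ⟨k - 1, by omega⟩
        exact absurd (ha.2 ⟨a' + x₁ * j, add_mul_mem h1add ha'.1 hx₁H j,
          by rw [hk1, Nat.mul_succ]; ring⟩) (by simp)
    · rcases Nat.eq_zero_or_pos k with h0 | h0
      · subst h0; omega
      · obtain ⟨j, rfl⟩ : ∃ j, k = j + 1 := ⟨k - 1, by omega⟩
        exact absurd (hb.2 ⟨b' + x₂ * j, add_mul_mem h2add hb'.1 hx₂H j,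
          by rw [hk2, Nat.mul_succ]; ring⟩) (by simp)
  rw [← Set.Finite.coe_toFinset hA, ← Set.Finite.coe_toFinset hB,
    ← Set.Finite.coe_toFinset hC, finsum_mem_coe_finset, finsum_mem_coe_finset,
    finsum_mem_coe_finset, Finset.sum_mul_sum]
  simp_rw [← pow_add]
  rw [← Finset.sum_product']
  symm
  refine Finset.sum_bij (fun p _ => x₂ * p.1 + x₁ * p.2) ?_ ?_ ?_ ?_
  · rintro ⟨a, b⟩ hp
    rw [Finset.mem_product, hA.mem_toFinset, hB.mem_toFinset] at hp
    exact hC.mem_toFinset.mpr (claimA a hp.1 b hp.2)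
  · rintro ⟨a, b⟩ hp ⟨a', b'⟩ hp' heq
    rw [Finset.mem_product, hA.mem_toFinset, hB.mem_toFinset] at hp hp'
    obtain ⟨h1, h2⟩ := claimC a hp.1 b hp.2 a' hp'.1 b' hp'.2 heq
    simp [h1, h2]
  · intro w hw
    obtain ⟨a, ha, b, hb, hab⟩ := claimB w (hC.mem_toFinset.mp hw)
    exact ⟨(a, b), Finset.mem_product.mpr ⟨hA.mem_toFinset.mpr ha, hB.mem_toFinset.mpr hb⟩,
      hab.symm⟩
  · rintro ⟨a, b⟩ hp
    rfl
end
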